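/- arXiv:2509.15385 — 5 statements merged into one kernel-verified Lean document; each statement's English description precedes it below -/
import Mathlib

section
/- The function φ(ρ, m) = ‖m‖²/M(ρ) (extended to be 0 when (M(ρ), m) = (0, 0) and +∞ otherwise) is jointly convex in (ρ, m) on ℝ × ℝ^d whenever the mobility M : ℝ → ℝ is nonnegative and concave. -/
lemma key_div {E : Type*} [NormedAddCommGroup E] [InnerProductSpace ℝ E]
    (x y : E) (p q c : ℝ) (hp : 0 < p) (hq : 0 < q) (hc : p + q ≤ c) :
    ‖x + y‖ ^ 2 / c ≤ ‖x‖ ^ 2 / p + ‖y‖ ^ 2 / q := by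
  have hc0 : 0 < c := lt_of_lt_of_le (by linarith) hc
  have h1 : ‖x + y‖ ^ 2 ≤ ‖x‖ ^ 2 + 2 * (‖x‖ * ‖y‖) + ‖y‖ ^ 2 := by
    have h := norm_add_sq_real x y
    have h2 := real_inner_le_norm x y
    nlinarith
  rw [div_add_div _ _ (ne_of_gt hp) (ne_of_gt hq), div_le_div_iff₀ hc0 (mul_pos hp hq)]
  nlinarith [sq_nonneg (q * ‖x‖ - p * ‖y‖), mul_pos hp hq, norm_nonneg x, norm_nonneg y,
    mul_nonneg (mul_nonneg (sq_nonneg ‖x‖) hq.le) (sub_nonneg.2 hc),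
    mul_nonneg (mul_nonneg (sq_nonneg ‖y‖) hp.le) (sub_nonneg.2 hc),
    mul_le_mul_of_nonneg_right h1 (mul_pos hp hq).le]

open Classical in
/-- The action function φ(ρ,m) = ‖m‖²/M(ρ), extended by 0 at (M(ρ),m)=(0,0) and +∞ otherwise. -/
noncomputable def phiAction {d : ℕ} (M : ℝ → ℝ) (ρ : ℝ) (m : EuclideanSpace ℝ (Fin d)) : EReal :=
  if 0 < M ρ then ((‖m‖ ^ 2 / M ρ : ℝ) : EReal)
  else if M ρ = 0 ∧ m = 0 then 0 else ⊤

/-- If the mobility M is nonnegative and concave, then φ is jointly convex in (ρ, m). -/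
theorem phiAction_jointly_convex {d : ℕ} (M : ℝ → ℝ)
    (hM0 : ∀ ρ, 0 ≤ M ρ) (hMconc : ConcaveOn ℝ Set.univ M) :
    ∀ (ρ₁ ρ₂ : ℝ) (m₁ m₂ : EuclideanSpace ℝ (Fin d)) (t : ℝ), 0 ≤ t → t ≤ 1 →
      phiAction M (t * ρ₁ + (1 - t) * ρ₂) (t • m₁ + (1 - t) • m₂)
        ≤ ((t : ℝ) : EReal) * phiAction M ρ₁ m₁
            + ((1 - t : ℝ) : EReal) * phiAction M ρ₂ m₂ := by
  intro ρ₁ ρ₂ m₁ m₂ t ht0 ht1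
  -- boundary cases t = 0 and t = 1
  rcases eq_or_lt_of_le ht0 with h0 | h0
  · subst h0
    simp [zero_mul, one_smul, zero_smul, EReal.coe_one, one_mul]
  rcases eq_or_lt_of_le ht1 with h1 | h1
  · subst h1
    simp [zero_mul, one_smul, zero_smul, EReal.coe_one, one_mul]
  set s : ℝ := 1 - t with hs_def
  have hs : 0 < s := by simp [hs_def]; linarith
  -- concavity
  have hconc : t * M ρ₁ + s * M ρ₂ ≤ M (t * ρ₁ + s * ρ₂) := by
    have := hMconc.2 (Set.mem_univ ρ₁) (Set.mem_univ ρ₂) h0.le hs.le (by ring)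
    simpa [smul_eq_mul] using this
  by_cases ha : 0 < M ρ₁
  · by_cases hb : 0 < M ρ₂
    · -- both positive
      have hc : 0 < M (t * ρ₁ + s * ρ₂) := by nlinarith
      rw [phiAction, phiAction, phiAction, if_pos ha, if_pos hb, if_pos hc]
      rw [← EReal.coe_mul, ← EReal.coe_mul, ← EReal.coe_add, EReal.coe_le_coe_iff]
      have hkey := key_div (t • m₁) (s • m₂) (t * M ρ₁) (s * M ρ₂)
        (M (t * ρ₁ + s * ρ₂)) (mul_pos h0 ha) (mul_pos hs hb) hconc
      have e1 : ‖t • m₁‖ ^ 2 = t ^ 2 * ‖m₁‖ ^ 2 := by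
        rw [norm_smul]; simp [abs_of_pos h0]; ring
      have e2 : ‖s • m₂‖ ^ 2 = s ^ 2 * ‖m₂‖ ^ 2 := by
        rw [norm_smul]; simp [abs_of_pos hs]; ring
      calc ‖t • m₁ + s • m₂‖ ^ 2 / M (t * ρ₁ + s * ρ₂)
          ≤ ‖t • m₁‖ ^ 2 / (t * M ρ₁) + ‖s • m₂‖ ^ 2 / (s * M ρ₂) := hkey
        _ = t * (‖m₁‖ ^ 2 / M ρ₁) + s * (‖m₂‖ ^ 2 / M ρ₂) := by
            rw [e1, e2]; field_simp
    · -- M ρ₂ = 0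
      have hb0 : M ρ₂ = 0 := le_antisymm (not_lt.1 hb) (hM0 ρ₂)
      by_cases hm2 : m₂ = 0
      · -- φ₂ = 0
        have hc : 0 < M (t * ρ₁ + s * ρ₂) := by nlinarith
        rw [phiAction, phiAction, phiAction, if_pos ha, if_pos hc, if_neg (not_lt.2 hb0.le),
          if_pos ⟨hb0, hm2⟩, mul_zero, add_zero]
        rw [← EReal.coe_mul, EReal.coe_le_coe_iff]
        have hcs : t * M ρ₁ ≤ M (t * ρ₁ + s * ρ₂) := by nlinarith
        have e1 : ‖t • m₁ + s • m₂‖ ^ 2 = t ^ 2 * ‖m₁‖ ^ 2 := by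
          rw [hm2, smul_zero, add_zero, norm_smul]; simp [abs_of_pos h0]; ring
        rw [e1]
        calc t ^ 2 * ‖m₁‖ ^ 2 / M (t * ρ₁ + s * ρ₂)
            ≤ t ^ 2 * ‖m₁‖ ^ 2 / (t * M ρ₁) := by
              apply div_le_div_of_nonneg_left (by positivity) (mul_pos h0 ha) hcs
          _ = t * (‖m₁‖ ^ 2 / M ρ₁) := by field_simp
      · -- φ₂ = ⊤, RHS = ⊤
        have : ((s : ℝ) : EReal) * phiAction M ρ₂ m₂ = ⊤ := by
          rw [phiAction, if_neg (not_lt.2 hb0.le), if_neg (by simp [hm2])]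
          exact EReal.coe_mul_top_of_pos hs
        rw [this]
        have hφ1 : phiAction M ρ₁ m₁ = ((‖m₁‖ ^ 2 / M ρ₁ : ℝ) : EReal) := by
          rw [phiAction, if_pos ha]
        rw [hφ1, ← EReal.coe_mul, EReal.add_top_of_ne_bot (EReal.coe_ne_bot _)]
        exact le_top
  · have ha0 : M ρ₁ = 0 := le_antisymm (not_lt.1 ha) (hM0 ρ₁)
    by_cases hm1 : m₁ = 0
    · by_cases hb : 0 < M ρ₂
      · -- symmetric to above
        have hc : 0 < M (t * ρ₁ + s * ρ₂) := by nlinarith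
        rw [phiAction, phiAction, phiAction, if_pos hb, if_pos hc, if_neg (not_lt.2 ha0.le),
          if_pos ⟨ha0, hm1⟩, mul_zero, zero_add]
        rw [← EReal.coe_mul, EReal.coe_le_coe_iff]
        have hcs : s * M ρ₂ ≤ M (t * ρ₁ + s * ρ₂) := by nlinarith
        have e1 : ‖t • m₁ + s • m₂‖ ^ 2 = s ^ 2 * ‖m₂‖ ^ 2 := by
          rw [hm1, smul_zero, zero_add, norm_smul]; simp [abs_of_pos hs]; ring
        rw [e1]
        calc s ^ 2 * ‖m₂‖ ^ 2 / M (t * ρ₁ + s * ρ₂)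
            ≤ s ^ 2 * ‖m₂‖ ^ 2 / (s * M ρ₂) := by
              apply div_le_div_of_nonneg_left (by positivity) (mul_pos hs hb) hcs
          _ = s * (‖m₂‖ ^ 2 / M ρ₂) := by field_simp
      · have hb0 : M ρ₂ = 0 := le_antisymm (not_lt.1 hb) (hM0 ρ₂)
        by_cases hm2 : m₂ = 0
        · -- everything zero
          have hLHS : phiAction M (t * ρ₁ + s * ρ₂) (t • m₁ + s • m₂) ≤ 0 := by
            rw [phiAction]
            split_ifs with hc hc2
            · rw [hm1, hm2, smul_zero, smul_zero, add_zero, norm_zero]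
              simp
            · exact le_refl 0
            · exfalso; apply hc2
              refine ⟨?_, by rw [hm1, hm2, smul_zero, smul_zero, add_zero]⟩
              exact le_antisymm (not_lt.1 hc) (hM0 _)
          have hRHS : ((t : ℝ) : EReal) * phiAction M ρ₁ m₁
              + ((s : ℝ) : EReal) * phiAction M ρ₂ m₂ = 0 := by
            rw [phiAction, phiAction, if_neg (not_lt.2 ha0.le), if_pos ⟨ha0, hm1⟩,
              if_neg (not_lt.2 hb0.le), if_pos ⟨hb0, hm2⟩, mul_zero, mul_zero, add_zero]
          rw [hRHS]; exact hLHS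
        · have h2 : ((s : ℝ) : EReal) * phiAction M ρ₂ m₂ = ⊤ := by
            rw [phiAction, if_neg (not_lt.2 hb0.le), if_neg (by simp [hm2])]
            exact EReal.coe_mul_top_of_pos hs
          have h1' : ((t : ℝ) : EReal) * phiAction M ρ₁ m₁ = 0 := by
            rw [phiAction, if_neg (not_lt.2 ha0.le), if_pos ⟨ha0, hm1⟩, mul_zero]
          rw [h1', h2, zero_add]; exact le_top
    · -- φ₁ = ⊤
      have h1' : ((t : ℝ) : EReal) * phiAction M ρ₁ m₁ = ⊤ := by
        rw [phiAction, if_neg (not_lt.2 ha0.le), if_neg (by simp [hm1])]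
        exact EReal.coe_mul_top_of_pos h0
      rw [h1']
      have h2ne : ((s : ℝ) : EReal) * phiAction M ρ₂ m₂ ≠ ⊥ := by
        rw [phiAction]
        split_ifs with hb hb2
        · rw [← EReal.coe_mul]; exact EReal.coe_ne_bot _
        · simp
        · rw [EReal.coe_mul_top_of_pos hs]; simp
      rw [EReal.top_add_of_ne_bot h2ne]
      exact le_top
end

section
/- For r > 0 and a nonnegative concave mobility M, the regularized action φ̂(ρ, m) = ‖m‖²/(M(ρ) + r) is twice continuously differentiable and convex on the set where M(ρ) ≥ 0, provided M is twice continuously differentiable there. -/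
/-- Scalar key inequality: Engel/Cauchy–Schwarz form. -/
lemma engel_ineq (u v a b N₁ N₂ : ℝ) (hN₁ : 0 < N₁) (hN₂ : 0 < N₂)
    (ha : 0 ≤ a) (hb : 0 ≤ b) :
    (a * u + b * v) ^ 2 / (a * N₁ + b * N₂) ≤ a * (u ^ 2 / N₁) + b * (v ^ 2 / N₂) := by
  rcases eq_or_lt_of_le (by positivity : (0:ℝ) ≤ a * N₁ + b * N₂) with h | h
  · have ha0 : a = 0 := by nlinarith
    have hb0 : b = 0 := by nlinarith
    simp [ha0, hb0]
  · rw [div_le_iff₀ h]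
    have poly : (a * u + b * v) ^ 2 * (N₁ * N₂) ≤
        (a * N₁ + b * N₂) * (a * u ^ 2 * N₂ + b * v ^ 2 * N₁) := by
      nlinarith [mul_nonneg (mul_nonneg ha hb) (sq_nonneg (u * N₂ - v * N₁))]
    have eq : (a * (u ^ 2 / N₁) + b * (v ^ 2 / N₂)) * (a * N₁ + b * N₂) * (N₁ * N₂) =
        (a * N₁ + b * N₂) * (a * u ^ 2 * N₂ + b * v ^ 2 * N₁) := by
      field_simp
    have hpos : 0 < N₁ * N₂ := mul_pos hN₁ hN₂
    have key : (a * u + b * v) ^ 2 * (N₁ * N₂) ≤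
        (a * (u ^ 2 / N₁) + b * (v ^ 2 / N₂)) * (a * N₁ + b * N₂) * (N₁ * N₂) := by
      rw [eq]; exact poly
    exact le_of_mul_le_mul_right key hpos

/-- For r > 0 and a nonnegative concave C² mobility M on an interval I, the regularized
action φ̂(ρ,m) = ‖m‖²/(M(ρ)+r) is twice continuously differentiable and convex on I × ℝᵈ. -/
theorem regularizedAction_smooth_and_convex {d : ℕ} (M : ℝ → ℝ) (r : ℝ) (hr : 0 < r)
    (I : Set ℝ) (hI : Convex ℝ I)
    (hM2 : ContDiffOn ℝ 2 M I) (hM0 : ∀ ρ ∈ I, 0 ≤ M ρ) (hMconc : ConcaveOn ℝ I M) :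
    ContDiffOn ℝ 2
        (fun p : ℝ × EuclideanSpace ℝ (Fin d) => ‖p.2‖ ^ 2 / (M p.1 + r))
        (I ×ˢ (Set.univ : Set (EuclideanSpace ℝ (Fin d)))) ∧
      ConvexOn ℝ (I ×ˢ (Set.univ : Set (EuclideanSpace ℝ (Fin d))))
        (fun p : ℝ × EuclideanSpace ℝ (Fin d) => ‖p.2‖ ^ 2 / (M p.1 + r)) := by
  have hpos : ∀ ρ ∈ I, 0 < M ρ + r := fun ρ hρ => by linarith [hM0 ρ hρ]
  constructor
  · apply ContDiffOn.div
    · exact ((contDiff_norm_sq ℝ).comp contDiff_snd).contDiffOn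
    · exact (hM2.comp contDiff_fst.contDiffOn (fun p hp => hp.1)).add contDiffOn_const
    · exact fun p hp => (hpos p.1 hp.1).ne'
  · refine ⟨hI.prod convex_univ, ?_⟩
    rintro ⟨ρ₁, m₁⟩ ⟨h1, -⟩ ⟨ρ₂, m₂⟩ ⟨h2, -⟩ a b ha hb hab
    simp only [Prod.smul_mk, Prod.mk_add_mk, Prod.fst, Prod.snd, smul_eq_mul]
    set N₁ := M ρ₁ + r with hN₁def
    set N₂ := M ρ₂ + r with hN₂def
    have hN₁ : 0 < N₁ := hpos ρ₁ h1
    have hN₂ : 0 < N₂ := hpos ρ₂ h2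
    have hconc : a * N₁ + b * N₂ ≤ M (a * ρ₁ + b * ρ₂) + r := by
      have := hMconc.2 h1 h2 ha hb hab
      simp only [smul_eq_mul] at this
      nlinarith
    have hcpos : 0 < a * N₁ + b * N₂ := by
      rcases ha.lt_or_eq with h | h
      · nlinarith [mul_pos h hN₁, mul_nonneg hb hN₂.le]
      · have hb1 : b = 1 := by linarith
        rw [← h, hb1]; simpa using hN₂
    have hnorm : ‖a • m₁ + b • m₂‖ ≤ a * ‖m₁‖ + b * ‖m₂‖ := by
      calc ‖a • m₁ + b • m₂‖ ≤ ‖a • m₁‖ + ‖b • m₂‖ := norm_add_le _ _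
        _ = a * ‖m₁‖ + b * ‖m₂‖ := by
          rw [norm_smul, norm_smul, Real.norm_eq_abs, Real.norm_eq_abs,
            abs_of_nonneg ha, abs_of_nonneg hb]
    have hsq : ‖a • m₁ + b • m₂‖ ^ 2 ≤ (a * ‖m₁‖ + b * ‖m₂‖) ^ 2 := by
      apply sq_le_sq' _ hnorm
      nlinarith [norm_nonneg (a • m₁ + b • m₂)]
    calc ‖a • m₁ + b • m₂‖ ^ 2 / (M (a * ρ₁ + b * ρ₂) + r)
        ≤ (a * ‖m₁‖ + b * ‖m₂‖) ^ 2 / (a * N₁ + b * N₂) := by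
          apply div_le_div₀ (by positivity) hsq hcpos hconc
      _ ≤ a * (‖m₁‖ ^ 2 / N₁) + b * (‖m₂‖ ^ 2 / N₂) :=
          engel_ineq _ _ _ _ _ _ hN₁ hN₂ ha hb
end

section
/- Define L(ρ) = D_ρ(ρ − ρ̂) − (ζ M'(ρ)/2) ∑_{j=1}^d (D_{m_j} m̂_j / (D_{m_j} M(ρ) + ζ))². If M is twice differentiable with M(ρ) > 0 and M''(ρ) < 0 on an open interval, and D_ρ, D_{m_j}, ζ > 0, then L is strictly increasing on that interval, and hence L has at most one root in the interval. -/
/-!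
With `S = ∑ (D_{m_j} m̂_j / (D_{m_j} M + ζ))²` and `T = ∑ (D_{m_j} m̂_j)² D_{m_j} / (D_{m_j} M + ζ)³`
one has `S' = -2 M' T`, hence `L' = D_ρ + (ζ/2)(-M'') S + ζ M'² T`. Every term is nonnegative
and `D_ρ > 0`, so `L' > 0` on the interval and `L` is strictly increasing, hence injective there.
-/

open Set

/-- The reduced first-order optimality function
L(ρ) = D_ρ(ρ − ρ̂) − (ζ M'(ρ)/2) ∑_j (D_{m_j} m̂_j / (D_{m_j} M(ρ) + ζ))². -/
noncomputable def Lred {d : ℕ} (M M' : ℝ → ℝ) (Dρ ζ : ℝ) (Dm : Fin d → ℝ)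
    (ρhat : ℝ) (mhat : Fin d → ℝ) (ρ : ℝ) : ℝ :=
  Dρ * (ρ - ρhat) - ζ * M' ρ / 2 * ∑ j, (Dm j * mhat j / (Dm j * M ρ + ζ)) ^ 2

lemma strictMonoOn_of_hasDerivAt_pos {D : Set ℝ} (hD : Convex ℝ D) (hDo : IsOpen D)
    {f f' : ℝ → ℝ} (hf : ∀ x ∈ D, HasDerivAt f (f' x) x) (hf' : ∀ x ∈ D, 0 < f' x) :
    StrictMonoOn f D :=
  strictMonoOn_of_deriv_pos hD (fun x hx => (hf x hx).continuousAt.continuousWithinAt)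
    fun x hx => by
      rw [hDo.interior_eq] at hx
      rw [(hf x hx).deriv]
      exact hf' x hx

lemma hasDerivAt_div_affine_sq {M : ℝ → ℝ} {M'x c k ζ x : ℝ} (hM : HasDerivAt M M'x x)
    (hx : k * M x + ζ ≠ 0) :
    HasDerivAt (fun y => (c / (k * M y + ζ)) ^ 2)
      (-2 * M'x * (c ^ 2 * k / (k * M x + ζ) ^ 3)) x := by
  have hden : HasDerivAt (fun y => k * M y + ζ) (k * M'x) x := (hM.const_mul k).add_const ζ
  refine (((hasDerivAt_const x c).fun_div hden hx).fun_pow 2).congr_deriv ?_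
  norm_num
  field_simp

lemma hasDerivAt_sum_div_affine_sq {ι : Type*} (s : Finset ι) {M : ℝ → ℝ} {M'x ζ x : ℝ}
    {c k : ι → ℝ} (hM : HasDerivAt M M'x x) (hx : ∀ j ∈ s, k j * M x + ζ ≠ 0) :
    HasDerivAt (fun y => ∑ j ∈ s, (c j / (k j * M y + ζ)) ^ 2)
      (-2 * M'x * ∑ j ∈ s, c j ^ 2 * k j / (k j * M x + ζ) ^ 3) x := by
  rw [Finset.mul_sum]
  exact HasDerivAt.fun_sum fun j hj => hasDerivAt_div_affine_sq hM (hx j hj)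

section Lred

variable {d : ℕ} {M M' M'' : ℝ → ℝ} {Dρ ζ : ℝ} {Dm : Fin d → ℝ} {ρhat ρ : ℝ} {mhat : Fin d → ℝ}

noncomputable def LredDeriv (M M' M'' : ℝ → ℝ) (Dρ ζ : ℝ) (Dm mhat : Fin d → ℝ) (ρ : ℝ) : ℝ :=
  Dρ + ζ / 2 * (-M'' ρ) * ∑ j, (Dm j * mhat j / (Dm j * M ρ + ζ)) ^ 2
    + ζ * M' ρ ^ 2 * ∑ j, (Dm j * mhat j) ^ 2 * Dm j / (Dm j * M ρ + ζ) ^ 3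

lemma hasDerivAt_Lred (hM1 : HasDerivAt M (M' ρ) ρ) (hM2 : HasDerivAt M' (M'' ρ) ρ)
    (hden : ∀ j, Dm j * M ρ + ζ ≠ 0) :
    HasDerivAt (Lred M M' Dρ ζ Dm ρhat mhat) (LredDeriv M M' M'' Dρ ζ Dm mhat ρ) ρ := by
  have hlin : HasDerivAt (fun ρ => Dρ * (ρ - ρhat)) Dρ ρ := by
    simpa using ((hasDerivAt_id ρ).sub_const ρhat).const_mul Dρ
  have hcoef : HasDerivAt (fun ρ => ζ * M' ρ / 2) (ζ * M'' ρ / 2) ρ :=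
    (hM2.const_mul ζ).div_const 2
  have hsum := hasDerivAt_sum_div_affine_sq (c := fun j => Dm j * mhat j) Finset.univ hM1
    fun j _ => hden j
  exact (hlin.fun_sub (hcoef.fun_mul hsum)).congr_deriv (by unfold LredDeriv; ring)

lemma LredDeriv_pos (hDρ : 0 < Dρ) (hζ : 0 < ζ) (hDm : ∀ j, 0 < Dm j) (hMρ : 0 < M ρ)
    (hM''ρ : M'' ρ < 0) : 0 < LredDeriv M M' M'' Dρ ζ Dm mhat ρ := by
  have hden : ∀ j, 0 < Dm j * M ρ + ζ := fun j => add_pos (mul_pos (hDm j) hMρ) hζ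
  have hS : 0 ≤ ∑ j, (Dm j * mhat j / (Dm j * M ρ + ζ)) ^ 2 :=
    Finset.sum_nonneg fun j _ => sq_nonneg _
  have hT : 0 ≤ ∑ j, (Dm j * mhat j) ^ 2 * Dm j / (Dm j * M ρ + ζ) ^ 3 :=
    Finset.sum_nonneg fun j _ => div_nonneg (mul_nonneg (sq_nonneg _) (hDm j).le)
      (pow_pos (hden j) 3).le
  have hM''ρ' : 0 < -M'' ρ := neg_pos.2 hM''ρ
  have := mul_nonneg (by positivity : 0 ≤ ζ / 2 * (-M'' ρ)) hS
  have := mul_nonneg (by positivity : 0 ≤ ζ * M' ρ ^ 2) hT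
  unfold LredDeriv
  linarith

end Lred

/-- If M is twice differentiable with M > 0 and M'' < 0 on an open interval, and the constants
are positive, then L is strictly increasing there and hence has at most one root there. -/
theorem Lred_strictMono_and_unique_root {d : ℕ} (M M' M'' : ℝ → ℝ)
    (Dρ ζ : ℝ) (Dm : Fin d → ℝ) (hDρ : 0 < Dρ) (hζ : 0 < ζ) (hDm : ∀ j, 0 < Dm j)
    (ρhat : ℝ) (mhat : Fin d → ℝ) (a b : ℝ)
    (hM1 : ∀ ρ ∈ Set.Ioo a b, HasDerivAt M (M' ρ) ρ)
    (hM2 : ∀ ρ ∈ Set.Ioo a b, HasDerivAt M' (M'' ρ) ρ)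
    (hMpos : ∀ ρ ∈ Set.Ioo a b, 0 < M ρ)
    (hMcc : ∀ ρ ∈ Set.Ioo a b, M'' ρ < 0) :
    StrictMonoOn (Lred M M' Dρ ζ Dm ρhat mhat) (Set.Ioo a b) ∧
      ∀ ρ₁ ∈ Set.Ioo a b, ∀ ρ₂ ∈ Set.Ioo a b,
        Lred M M' Dρ ζ Dm ρhat mhat ρ₁ = 0 → Lred M M' Dρ ζ Dm ρhat mhat ρ₂ = 0 →
          ρ₁ = ρ₂ := by
  have hmono : StrictMonoOn (Lred M M' Dρ ζ Dm ρhat mhat) (Ioo a b) :=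
    strictMonoOn_of_hasDerivAt_pos (convex_Ioo a b) isOpen_Ioo
      (fun ρ hρ => hasDerivAt_Lred (hM1 ρ hρ) (hM2 ρ hρ)
        fun j => (add_pos (mul_pos (hDm j) (hMpos ρ hρ)) hζ).ne')
      fun ρ hρ => LredDeriv_pos hDρ hζ hDm (hMpos ρ hρ) (hMcc ρ hρ)
  exact ⟨hmono, fun ρ₁ h₁ ρ₂ h₂ e₁ e₂ => hmono.injOn h₁ h₂ (e₁.trans e₂.symm)⟩
end

section
/- For M(ρ) = (ρ−α)(β−ρ), the reduced optimality function L satisfies the symmetry L(ρ_m + s; ρ̂) = −L(ρ_m − s; 2ρ_m − ρ̂) for all s, where ρ_m = (α+β)/2 and the second argument indicates the value of the data ρ̂. In particular, if ρ̂ = ρ_m, then ρ* = ρ_m is the unique root of L in (α, β). -/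
/-- For M(ρ) = (ρ−α)(β−ρ), the reduced optimality function L(ρ; ρ̂) satisfies the symmetry
L(ρ_m + s; ρ̂) = −L(ρ_m − s; 2ρ_m − ρ̂); in particular, if ρ̂ = ρ_m then ρ* = ρ_m is the
unique root of L(·; ρ_m) in (α, β). -/
theorem quadratic_mobility_L_symmetry {d : ℕ} (α β : ℝ) (hαβ : α < β)
    (Dρ ζ : ℝ) (Dm : Fin d → ℝ) (hDρ : 0 < Dρ) (hζ : 0 < ζ) (hDm : ∀ j, 0 < Dm j)
    (mhat : Fin d → ℝ)
    (ρm : ℝ) (hρm : ρm = (α + β) / 2)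
    (L : ℝ → ℝ → ℝ)
    (hL : ∀ ρ ρhat, L ρ ρhat = Dρ * (ρ - ρhat)
        - ζ * (α + β - 2 * ρ) / 2
            * ∑ j, (Dm j * mhat j / (Dm j * ((ρ - α) * (β - ρ)) + ζ)) ^ 2) :
    (∀ s ρhat, L (ρm + s) ρhat = -L (ρm - s) (2 * ρm - ρhat)) ∧
    (∀ ρ ∈ Set.Ioo α β, (L ρ ρm = 0 ↔ ρ = ρm)) := by
  subst hρm
  constructor
  · intro s ρhat
    rw [hL, hL]
    have hM : ∀ j : Fin d,
        (Dm j * mhat j / (Dm j * (((α+β)/2 + s - α) * (β - ((α+β)/2 + s))) + ζ))^2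
          = (Dm j * mhat j / (Dm j * (((α+β)/2 - s - α) * (β - ((α+β)/2 - s))) + ζ))^2 := by
      intro j; ring_nf
    rw [Finset.sum_congr rfl (fun j _ => hM j)]
    ring
  · intro ρ hρ
    rw [hL]
    have hS : 0 ≤ ∑ j, (Dm j * mhat j / (Dm j * ((ρ - α) * (β - ρ)) + ζ))^2 :=
      Finset.sum_nonneg fun j _ => sq_nonneg _
    set S := ∑ j, (Dm j * mhat j / (Dm j * ((ρ - α) * (β - ρ)) + ζ))^2 with hSdef
    have key : Dρ * (ρ - (α+β)/2) - ζ * (α + β - 2*ρ)/2 * S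
        = (ρ - (α+β)/2) * (Dρ + ζ*S) := by ring
    rw [key]
    constructor
    · intro h
      rcases mul_eq_zero.mp h with h1 | h2
      · linarith
      · nlinarith
    · intro h; simp [h]
end

section
/- For M(ρ) = ρ^ξ with ξ ∈ (0, 1) and any ρ̂ ∈ ℝ, D_ρ, ζ, D_{m_j} > 0, m̂ ∈ ℝ^d, the function L(ρ) = D_ρ(ρ − ρ̂) − (ζ ξ ρ^{ξ−1}/2) ∑_j (D_{m_j} m̂_j/(D_{m_j} ρ^ξ + ζ))² satisfies L(ρ) → −∞ as ρ → 0⁺ (when m̂ ≠ 0) and L(ρ) → +∞ as ρ → +∞; hence by continuity L has at least one root in (0, +∞), and since L' > 0 on (0, ∞) this root is unique. -/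
open Filter Set Topology

/-- For M(ρ) = ρ^ξ with ξ ∈ (0,1): L tends to +∞ as ρ → +∞; and when m̂ ≠ 0, L tends to
−∞ as ρ → 0⁺, hence (the root existing by continuity and being unique since L' > 0)
L has exactly one root in (0, +∞). -/
theorem power_mobility_root_existence {d : ℕ} (ξ : ℝ) (hξ0 : 0 < ξ) (hξ1 : ξ < 1)
    (Dρ ζ : ℝ) (Dm : Fin d → ℝ) (hDρ : 0 < Dρ) (hζ : 0 < ζ) (hDm : ∀ j, 0 < Dm j)
    (ρhat : ℝ) (mhat : EuclideanSpace ℝ (Fin d))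
    (L : ℝ → ℝ)
    (hL : ∀ ρ, L ρ = Dρ * (ρ - ρhat)
        - ζ * ξ * ρ ^ (ξ - 1) / 2
            * ∑ j, (Dm j * mhat j / (Dm j * ρ ^ ξ + ζ)) ^ 2) :
    Filter.Tendsto L Filter.atTop Filter.atTop ∧
    (mhat ≠ 0 →
      Filter.Tendsto L (nhdsWithin 0 (Set.Ioi 0)) Filter.atBot ∧
      ∃! ρ, 0 < ρ ∧ L ρ = 0) := by
  have hLform : ∀ ρ : ℝ, L ρ = Dρ * (ρ - ρhat)
      - ζ * ξ * ρ ^ (ξ - 1) / 2 * ∑ j, (Dm j * mhat j) ^ 2 / (Dm j * ρ ^ ξ + ζ) ^ 2 := by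
    intro ρ; rw [hL]; simp [div_pow]
  have hden : ∀ (ρ : ℝ), 0 < ρ → ∀ j, 0 < Dm j * ρ ^ ξ + ζ := by
    intro ρ hρ j
    have h1 := hDm j
    have h2 : 0 < ρ ^ ξ := Real.rpow_pos_of_pos hρ ξ
    positivity
  have hS0 : ∀ ρ : ℝ, 0 ≤ ∑ j, (Dm j * mhat j) ^ 2 / (Dm j * ρ ^ ξ + ζ) ^ 2 := by
    intro ρ
    apply Finset.sum_nonneg
    intro j _
    positivity
  set C : ℝ := ∑ j, (Dm j * mhat j) ^ 2 / ζ ^ 2 with hCdef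
  have hC0 : 0 ≤ C := by positivity
  have hSC : ∀ ρ : ℝ, 0 < ρ →
      ∑ j, (Dm j * mhat j) ^ 2 / (Dm j * ρ ^ ξ + ζ) ^ 2 ≤ C := by
    intro ρ hρ
    apply Finset.sum_le_sum
    intro j _
    have h2 : 0 < ρ ^ ξ := Real.rpow_pos_of_pos hρ ξ
    have h1 := hDm j
    gcongr
    nlinarith
  -- tendsto atTop
  have htop : Tendsto L atTop atTop := by
    have h1 : Tendsto (fun ρ : ℝ => Dρ * ρ) atTop atTop :=
      Tendsto.const_mul_atTop hDρ tendsto_id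
    have h2 : Tendsto (fun ρ : ℝ => Dρ * ρ + (-(Dρ * ρhat) - ζ * ξ / 2 * C)) atTop atTop :=
      tendsto_atTop_add_const_right _ _ h1
    have h3 : Tendsto (fun ρ : ℝ => Dρ * (ρ - ρhat) - ζ * ξ / 2 * C) atTop atTop :=
      h2.congr (fun ρ => by ring)
    apply tendsto_atTop_mono' _ _ h3
    filter_upwards [eventually_ge_atTop (1 : ℝ)] with ρ hρ1
    have hρ : (0 : ℝ) < ρ := lt_of_lt_of_le one_pos hρ1
    rw [hLform]
    have hr1 : ρ ^ (ξ - 1) ≤ 1 := Real.rpow_le_one_of_one_le_of_nonpos hρ1 (by linarith)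
    have hr0 : 0 ≤ ρ ^ (ξ - 1) := (Real.rpow_pos_of_pos hρ _).le
    have key : ζ * ξ * ρ ^ (ξ - 1) / 2 * (∑ j, (Dm j * mhat j) ^ 2 / (Dm j * ρ ^ ξ + ζ) ^ 2)
        ≤ ζ * ξ / 2 * C := by
      calc ζ * ξ * ρ ^ (ξ - 1) / 2 * (∑ j, (Dm j * mhat j) ^ 2 / (Dm j * ρ ^ ξ + ζ) ^ 2)
          ≤ ζ * ξ * 1 / 2 * C := by
            apply mul_le_mul _ (hSC ρ hρ) (hS0 ρ) (by positivity)
            gcongr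
        _ = ζ * ξ / 2 * C := by ring
    linarith
  -- strict monotonicity on (0, ∞)
  have hmono : StrictMonoOn L (Ioi 0) := by
    intro a ha b hb hab
    simp only [mem_Ioi] at ha hb
    rw [hLform, hLform]
    have hra : 0 < a ^ (ξ - 1) := Real.rpow_pos_of_pos ha _
    have hexp : b ^ (ξ - 1) ≤ a ^ (ξ - 1) :=
      Real.rpow_le_rpow_of_nonpos ha hab.le (by linarith)
    have hSab : ∑ j, (Dm j * mhat j) ^ 2 / (Dm j * b ^ ξ + ζ) ^ 2
        ≤ ∑ j, (Dm j * mhat j) ^ 2 / (Dm j * a ^ ξ + ζ) ^ 2 := by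
      apply Finset.sum_le_sum
      intro j _
      have h1 := hDm j
      have h2 : 0 < a ^ ξ := Real.rpow_pos_of_pos ha ξ
      have h3 : a ^ ξ ≤ b ^ ξ := Real.rpow_le_rpow ha.le hab.le hξ0.le
      gcongr
    have hterm : ζ * ξ * b ^ (ξ - 1) / 2 * (∑ j, (Dm j * mhat j) ^ 2 / (Dm j * b ^ ξ + ζ) ^ 2)
        ≤ ζ * ξ * a ^ (ξ - 1) / 2 * (∑ j, (Dm j * mhat j) ^ 2 / (Dm j * a ^ ξ + ζ) ^ 2) := by
      apply mul_le_mul _ hSab (hS0 b) (by positivity)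
      gcongr
    have hlin : Dρ * (a - ρhat) < Dρ * (b - ρhat) := by nlinarith
    linarith
  -- continuity on (0, ∞)
  have hLeq : L = fun ρ : ℝ => Dρ * (ρ - ρhat)
      - ζ * ξ * ρ ^ (ξ - 1) / 2 * ∑ j, (Dm j * mhat j) ^ 2 / (Dm j * ρ ^ ξ + ζ) ^ 2 :=
    funext hLform
  have hcont : ContinuousOn L (Ioi 0) := by
    rw [hLeq]
    apply ContinuousOn.sub
    · fun_prop
    apply ContinuousOn.mul
    · apply ContinuousOn.div_const
      apply ContinuousOn.mul continuousOn_const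
      intro x hx
      exact (Real.continuousAt_rpow_const x _ (Or.inl (ne_of_gt hx))).continuousWithinAt
    · apply continuousOn_finset_sum
      intro j _
      apply ContinuousOn.div continuousOn_const
      · apply ContinuousOn.pow
        apply ContinuousOn.add _ continuousOn_const
        apply ContinuousOn.mul continuousOn_const
        intro x hx
        exact (Real.continuousAt_rpow_const x _ (Or.inl (ne_of_gt hx))).continuousWithinAt
      · intro x hx
        exact pow_ne_zero _ (ne_of_gt (hden x hx j))
  refine ⟨htop, fun hm => ?_⟩
  -- pick a nonzero coordinate
  obtain ⟨j0, hj0⟩ : ∃ j, mhat j ≠ 0 := by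
    by_contra h
    push_neg at h
    exact hm (by ext j; exact h j)
  have hc : Dm j0 * mhat j0 ≠ 0 := mul_ne_zero (hDm j0).ne' hj0
  set ε : ℝ := (Dm j0 * mhat j0) ^ 2 / (Dm j0 + ζ) ^ 2 with hεdef
  have hε : 0 < ε := by
    have h1 := hDm j0
    positivity
  -- lower bound for the sum near 0
  have hSlow : ∀ ρ ∈ Ioc (0:ℝ) 1, ε ≤ ∑ j, (Dm j * mhat j) ^ 2 / (Dm j * ρ ^ ξ + ζ) ^ 2 := by
    intro ρ hρ
    obtain ⟨hρ0, hρ1⟩ := hρ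
    have h1 := hDm j0
    have hrle : ρ ^ ξ ≤ 1 := Real.rpow_le_one hρ0.le hρ1 hξ0.le
    have hterm : ε ≤ (Dm j0 * mhat j0) ^ 2 / (Dm j0 * ρ ^ ξ + ζ) ^ 2 := by
      rw [hεdef]
      have h2 : 0 < ρ ^ ξ := Real.rpow_pos_of_pos hρ0 ξ
      gcongr
      all_goals nlinarith
    refine le_trans hterm ?_
    apply Finset.single_le_sum (fun j _ => ?_) (Finset.mem_univ j0)
    positivity
  -- tendsto atBot as ρ → 0+
  have hg : Tendsto (fun ρ : ℝ => ρ ^ (ξ - 1)) (𝓝[>] (0:ℝ)) atTop := by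
    have hinv : Tendsto (fun ρ : ℝ => ρ⁻¹) (𝓝[>] (0:ℝ)) atTop := tendsto_inv_nhdsGT_zero
    have h1 := (tendsto_rpow_atTop (by linarith : (0:ℝ) < 1 - ξ)).comp hinv
    apply h1.congr'
    filter_upwards [self_mem_nhdsWithin] with ρ hρ
    simp only [Function.comp_apply]
    rw [← Real.rpow_neg_one ρ, ← Real.rpow_mul (le_of_lt hρ)]
    congr 1
    ring
  have hbot : Tendsto L (𝓝[>] (0:ℝ)) atBot := by
    have hgk : Tendsto (fun ρ : ℝ => ζ * ξ * ε / 2 * ρ ^ (ξ - 1)) (𝓝[>] (0:ℝ)) atTop :=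
      Tendsto.const_mul_atTop (by positivity) hg
    have hneg : Tendsto (fun ρ : ℝ => -(ζ * ξ * ε / 2 * ρ ^ (ξ - 1))) (𝓝[>] (0:ℝ)) atBot :=
      tendsto_neg_atTop_atBot.comp hgk
    have hbd : Tendsto (fun ρ : ℝ => Dρ * (1 - ρhat) - ζ * ξ * ε / 2 * ρ ^ (ξ - 1))
        (𝓝[>] (0:ℝ)) atBot := by
      have := tendsto_atBot_add_const_left (𝓝[>] (0:ℝ)) (Dρ * (1 - ρhat)) hneg
      exact this.congr (fun ρ => by ring)
    apply tendsto_atBot_mono' _ _ hbd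
    filter_upwards [Ioc_mem_nhdsGT_of_mem (by simp : (0:ℝ) ∈ Ico (0:ℝ) 1)] with ρ hρ
    obtain ⟨hρ0, hρ1⟩ := hρ
    rw [hLform]
    have hr0 : 0 < ρ ^ (ξ - 1) := Real.rpow_pos_of_pos hρ0 _
    have hterm : ζ * ξ * ε / 2 * ρ ^ (ξ - 1)
        ≤ ζ * ξ * ρ ^ (ξ - 1) / 2 * (∑ j, (Dm j * mhat j) ^ 2 / (Dm j * ρ ^ ξ + ζ) ^ 2) := by
      have := hSlow ρ ⟨hρ0, hρ1⟩
      calc ζ * ξ * ε / 2 * ρ ^ (ξ - 1) = ζ * ξ * ρ ^ (ξ - 1) / 2 * ε := by ring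
        _ ≤ ζ * ξ * ρ ^ (ξ - 1) / 2 * (∑ j, (Dm j * mhat j) ^ 2 / (Dm j * ρ ^ ξ + ζ) ^ 2) := by
            apply mul_le_mul_of_nonneg_left this (by positivity)
    have hlin : Dρ * (ρ - ρhat) ≤ Dρ * (1 - ρhat) := by nlinarith
    linarith
  refine ⟨hbot, ?_⟩
  -- existence of a point where L is negative, near 0
  obtain ⟨a, ha0, hLa⟩ : ∃ a : ℝ, 0 < a ∧ L a < 0 := by
    have h1 : ∀ᶠ ρ in 𝓝[>] (0:ℝ), ρ ∈ Ioi (0:ℝ) := eventually_mem_nhdsWithin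
    have h2 := hbot.eventually (eventually_lt_atBot (0:ℝ))
    exact (h1.and h2).exists
  obtain ⟨b, hLb, hab⟩ : ∃ b : ℝ, 0 < L b ∧ a ≤ b :=
    ((htop.eventually (eventually_gt_atTop (0:ℝ))).and (eventually_ge_atTop a)).exists
  have hsub : Icc a b ⊆ Ioi 0 := fun x hx => lt_of_lt_of_le ha0 hx.1
  obtain ⟨ρ₀, hρ₀mem, hρ₀⟩ := intermediate_value_Icc hab (hcont.mono hsub) ⟨hLa.le, hLb.le⟩
  have hρ₀pos : 0 < ρ₀ := lt_of_lt_of_le ha0 hρ₀mem.1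
  refine ⟨ρ₀, ⟨hρ₀pos, hρ₀⟩, ?_⟩
  rintro ρ' ⟨hρ'0, hρ'L⟩
  exact hmono.injOn (mem_Ioi.mpr hρ'0) (mem_Ioi.mpr hρ₀pos) (by rw [hρ'L, hρ₀])
end
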